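/- Let N ≥ 1, let M ⊆ ℝ^N be a linear subspace, let a : ℝ → ℝ^N and b : ℝ → Sym_N(ℝ) be continuous with b(v) positive semidefinite, let δ, γ ∈ (0,1), let K_p ⊂ ℝ be compact, and let 𝔠 > 0 be such that x·b(v)x ≥ 𝔠 |P_M x|² for all v ∈ K_p and x ∈ ℝ^N. Let ψ : ℂ → ℝ satisfy |ψ(z)| ≤ 1 for all z and ψ(z) = 0 whenever |z| < 1/2. Define L(iτ,ik,v) = i(τ + a(v)·k) + k·b(v)k, ρ = √(τ²+|k|²), the normalized symbol L̃(iτ,ik,v) = L(iτ/ρ, ik/ρ, v) (for (τ,k) ≠ 0), and the restricted normalized symbol R̃L(iτ,ik,v) = i(τ + (P_{M⊥}a)(v)·P_{M⊥}k)/√(τ² + |P_{M⊥}k|²) (defined when (τ, P_{M⊥}k) ≠ 0). Then there exists a constant C > 0, depending only on δ, γ, N, M, a, b, K_p and 𝔠, such that for all v ∈ K_p and all (τ,k) ∈ ℝ × ℝ^N with (τ, P_{M⊥}k) ≠ 0 (in particular (τ,k) ∉ {0} × M), |ψ(L̃(iτ,ik,v)/δ) · ψ(ρ/γ) · ψ(R̃L(iτ,ik,v)/δ)|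 · (ρ + |P_M k|²) ≤ C · |L(iτ,ik,v)|. -/

import Mathlib

/-!
The paper's key pointwise symbol bound on the "parabolic" velocity range `K_p`: where `b` is
uniformly elliptic in the directions of `M`, the symbol `L` dominates `√(τ²+|k|²) + |P_M k|²`
on the frequency region selected by the cutoffs.
-/

open MeasureTheory Filter Topology RealInnerProductSpace ENNReal NNReal
noncomputable section

/-- `ℝ^N` as a Euclidean space. -/
abbrev Ee (N : ℕ) := EuclideanSpace ℝ (Fin N)

/-- The symbol `L(iτ, ik, v) = i(τ + a(v)·k) + k·b(v)k`. -/
def Lsym (N : ℕ) (a : ℝ → Ee N) (b : ℝ → (Ee N →L[ℝ] Ee N)) (ξ : ℝ × Ee N) (v : ℝ) : ℂ :=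
  Complex.I * ((ξ.1 + ⟪a v, ξ.2⟫ : ℝ) : ℂ) + ((⟪b v ξ.2, ξ.2⟫ : ℝ) : ℂ)

/-- The normalized symbol `L̃(iτ, ik, v) = L(iτ/ρ, ik/ρ, v)`, `ρ = √(τ²+|k|²)`. -/
def Lnorm (N : ℕ) (a : ℝ → Ee N) (b : ℝ → (Ee N →L[ℝ] Ee N)) (ξ : ℝ × Ee N) (v : ℝ) : ℂ :=
  Lsym N a b ((Real.sqrt (ξ.1 ^ 2 + ‖ξ.2‖ ^ 2))⁻¹ * ξ.1,
    (Real.sqrt (ξ.1 ^ 2 + ‖ξ.2‖ ^ 2))⁻¹ • ξ.2) v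

/-- The restricted normalized symbol
`R̃L(iτ, ik, v) = i(τ + (P_{M⊥}a)(v)·P_{M⊥}k)/√(τ² + |P_{M⊥}k|²)`. -/
def RLnorm (N : ℕ) (M : Submodule ℝ (Ee N)) [Submodule.HasOrthogonalProjection M] (a : ℝ → Ee N)
    (ξ : ℝ × Ee N) (v : ℝ) : ℂ :=
  Complex.I *
    (((ξ.1 + ⟪(Submodule.orthogonalProjectionOnto Mᗮ (a v) : Ee N), (Submodule.orthogonalProjectionOnto Mᗮ ξ.2 : Ee N)⟫) /
      Real.sqrt (ξ.1 ^ 2 + ‖(Submodule.orthogonalProjectionOnto Mᗮ ξ.2 : Ee N)‖ ^ 2) : ℝ) : ℂ)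

set_option maxHeartbeats 1000000 in
theorem parabolic_range_pointwise_symbol_bound
    (N : ℕ) (hN : 1 ≤ N)
    (M : Submodule ℝ (Ee N))
    (a : ℝ → Ee N) (ha : Continuous a)
    (b : ℝ → (Ee N →L[ℝ] Ee N)) (hb : Continuous b)
    (hbsym : ∀ (v : ℝ) (x y : Ee N), ⟪b v x, y⟫ = ⟪x, b v y⟫)
    (hbpos : ∀ (v : ℝ) (x : Ee N), 0 ≤ ⟪b v x, x⟫)
    (δ γ : ℝ) (hδ : δ ∈ Set.Ioo (0:ℝ) 1) (hγ : γ ∈ Set.Ioo (0:ℝ) 1)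
    (Kp : Set ℝ) (hKp : IsCompact Kp)
    (c : ℝ) (hc : 0 < c)
    -- `b` is uniformly elliptic in the directions of `M` on `K_p`
    (hell : ∀ v ∈ Kp, ∀ x : Ee N,
      c * ‖(Submodule.orthogonalProjectionOnto M x : Ee N)‖ ^ 2 ≤ ⟪b v x, x⟫)
    (ψ : ℂ → ℝ) (hψle : ∀ z : ℂ, |ψ z| ≤ 1)
    (hψ0 : ∀ z : ℂ, ‖z‖ < 1 / 2 → ψ z = 0) :
    ∃ C : ℝ, 0 < C ∧
      ∀ v ∈ Kp, ∀ ξ : ℝ × Ee N,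
        ¬(ξ.1 = 0 ∧ (Submodule.orthogonalProjectionOnto Mᗮ ξ.2 : Ee N) = 0) →
        |ψ (Lnorm N a b ξ v / (δ : ℂ)) *
            ψ (((Real.sqrt (ξ.1 ^ 2 + ‖ξ.2‖ ^ 2) / γ : ℝ) : ℂ)) *
            ψ (RLnorm N M a ξ v / (δ : ℂ))| *
          (Real.sqrt (ξ.1 ^ 2 + ‖ξ.2‖ ^ 2) + ‖(Submodule.orthogonalProjectionOnto M ξ.2 : Ee N)‖ ^ 2)
        ≤ C * ‖Lsym N a b ξ v‖ := by
  obtain ⟨hδ0, hδ1⟩ := hδ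
  obtain ⟨hγ0, hγ1⟩ := hγ
  refine ⟨(2/δ)*(1+2/γ) + 1/c, by positivity, ?_⟩
  intro v hv ξ hξ
  set τ := ξ.1 with hτ
  set k := ξ.2 with hk
  set ρ := Real.sqrt (τ ^ 2 + ‖k‖ ^ 2) with hρ
  have hρ0 : 0 ≤ ρ := Real.sqrt_nonneg _
  have hLabs : 0 ≤ ‖Lsym N a b ξ v‖ := norm_nonneg _
  by_cases h1 : ψ (Lnorm N a b ξ v / (δ : ℂ)) = 0
  · rw [h1]
    simp only [zero_mul, abs_zero]
    positivity
  by_cases h2 : ψ (((ρ / γ : ℝ) : ℂ)) = 0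
  · rw [h2]
    simp only [mul_zero, zero_mul, abs_zero]
    positivity
  -- From the nonvanishing of the cutoffs:
  have hL' : δ / 2 ≤ ‖Lnorm N a b ξ v‖ := by
    by_contra hcon
    push_neg at hcon
    apply h1
    apply hψ0
    rw [norm_div, Complex.norm_real, Real.norm_eq_abs, abs_of_pos hδ0, div_lt_iff₀ hδ0]
    linarith
  have hρge : γ / 2 ≤ ρ := by
    by_contra hcon
    push_neg at hcon
    apply h2
    apply hψ0
    rw [Complex.norm_real, Real.norm_eq_abs, abs_div, abs_of_nonneg hρ0, abs_of_pos hγ0, div_lt_iff₀ hγ0]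
    linarith
  have hρpos : 0 < ρ := lt_of_lt_of_le (by linarith) hρge
  -- Notation
  set Im' := τ + ⟪a v, k⟫ with hIm
  set Re' := ⟪b v k, k⟫ with hRe
  have hRe0 : 0 ≤ Re' := hbpos v k
  -- |L| dominates |Im'| and Re'
  have him : (Lsym N a b ξ v).im = Im' := by
    simp [Lsym, hIm, ← hτ, ← hk]
  have hre : (Lsym N a b ξ v).re = Re' := by
    simp [Lsym, hRe, ← hτ, ← hk]
  have hLIm : |Im'| ≤ ‖Lsym N a b ξ v‖ := him ▸ Complex.abs_im_le_norm _
  have hLRe : Re' ≤ ‖Lsym N a b ξ v‖ := by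
    have h := Complex.abs_re_le_norm (Lsym N a b ξ v)
    rw [hre, abs_of_nonneg hRe0] at h
    exact h
  -- Compute the normalized symbol
  have hLnorm : Lnorm N a b ξ v
      = Complex.I * ((ρ⁻¹ * Im' : ℝ) : ℂ) + ((ρ⁻¹ * (ρ⁻¹ * Re') : ℝ) : ℂ) := by
    rw [Lnorm, Lsym]
    have e1 : ⟪a v, ρ⁻¹ • k⟫ = ρ⁻¹ * ⟪a v, k⟫ := real_inner_smul_right _ _ _
    have e2 : ⟪b v (ρ⁻¹ • k), ρ⁻¹ • k⟫ = ρ⁻¹ * (ρ⁻¹ * Re') := by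
      rw [(b v).map_smul, real_inner_smul_left, real_inner_smul_right, hRe]
    simp only [← hτ, ← hk, ← hρ, e1, e2, hIm]
    push_cast
    ring
  have habsnorm : ‖Lnorm N a b ξ v‖ ≤ ρ⁻¹ * |Im'| + ρ⁻¹ * (ρ⁻¹ * Re') := by
    rw [hLnorm]
    calc ‖Complex.I * ((ρ⁻¹ * Im' : ℝ) : ℂ) + ((ρ⁻¹ * (ρ⁻¹ * Re') : ℝ) : ℂ)‖
        ≤ ‖Complex.I * ((ρ⁻¹ * Im' : ℝ) : ℂ)‖
          + ‖((ρ⁻¹ * (ρ⁻¹ * Re') : ℝ) : ℂ)‖ := norm_add_le _ _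
      _ = ρ⁻¹ * |Im'| + ρ⁻¹ * (ρ⁻¹ * Re') := by
          simp [norm_mul, Complex.norm_I, Complex.norm_real, Real.norm_eq_abs, abs_mul, abs_inv,
            abs_of_nonneg hρ0, abs_of_nonneg hRe0]
  -- ρ⁻¹ is bounded by 2/γ
  have hinv : ρ⁻¹ ≤ 2 / γ := by
    have h := inv_anti₀ (by positivity : (0:ℝ) < γ / 2) hρge
    calc ρ⁻¹ ≤ (γ / 2)⁻¹ := h
      _ = 2 / γ := by field_simp
  -- key bound on ρ
  have key : ρ * (δ / 2) ≤ |Im'| + (2 / γ) * Re' := by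
    have h := hL'.trans habsnorm
    have h2 : ρ * (δ / 2) ≤ ρ * (ρ⁻¹ * |Im'| + ρ⁻¹ * (ρ⁻¹ * Re')) :=
      mul_le_mul_of_nonneg_left h hρ0
    have h3 : ρ * (ρ⁻¹ * |Im'| + ρ⁻¹ * (ρ⁻¹ * Re')) = |Im'| + ρ⁻¹ * Re' := by
      field_simp
    rw [h3] at h2
    have h4 : ρ⁻¹ * Re' ≤ (2 / γ) * Re' := mul_le_mul_of_nonneg_right hinv hRe0
    linarith
  set A := ‖Lsym N a b ξ v‖ with hA
  have hρle : ρ ≤ (2 / δ) * (1 + 2 / γ) * A := by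
    have h5 : |Im'| + (2 / γ) * Re' ≤ (1 + 2 / γ) * A := by
      have : (2 / γ) * Re' ≤ (2 / γ) * A :=
        mul_le_mul_of_nonneg_left hLRe (by positivity)
      nlinarith
    have h6 : ρ * (δ / 2) ≤ (1 + 2 / γ) * A := key.trans h5
    have h7 := mul_le_mul_of_nonneg_left h6 (le_of_lt (by positivity : (0:ℝ) < 2 / δ))
    have h8 : (2 / δ) * (ρ * (δ / 2)) = ρ := by
      field_simp
    calc ρ = (2 / δ) * (ρ * (δ / 2)) := h8.symm
      _ ≤ (2 / δ) * ((1 + 2 / γ) * A) := h7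
      _ = (2 / δ) * (1 + 2 / γ) * A := by ring
  have hp : ‖(Submodule.orthogonalProjectionOnto M k : Ee N)‖ ^ 2 ≤ (1 / c) * A := by
    have h := (hell v hv k).trans hLRe
    calc ‖(Submodule.orthogonalProjectionOnto M k : Ee N)‖ ^ 2
        = (1 / c) * (c * ‖(Submodule.orthogonalProjectionOnto M k : Ee N)‖ ^ 2) := by
          field_simp
      _ ≤ (1 / c) * A := mul_le_mul_of_nonneg_left h (by positivity)
  -- combine
  have hψprod : |ψ (Lnorm N a b ξ v / (δ : ℂ)) * ψ (((ρ / γ : ℝ) : ℂ)) *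
      ψ (RLnorm N M a ξ v / (δ : ℂ))| ≤ 1 := by
    rw [abs_mul, abs_mul]
    exact mul_le_one₀ (mul_le_one₀ (hψle _) (abs_nonneg _) (hψle _)) (abs_nonneg _) (hψle _)
  have hsumnn : (0:ℝ) ≤ ρ + ‖(Submodule.orthogonalProjectionOnto M k : Ee N)‖ ^ 2 := by positivity
  calc |ψ (Lnorm N a b ξ v / (δ : ℂ)) * ψ (((ρ / γ : ℝ) : ℂ)) *
        ψ (RLnorm N M a ξ v / (δ : ℂ))| *
        (ρ + ‖(Submodule.orthogonalProjectionOnto M k : Ee N)‖ ^ 2)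
      ≤ 1 * (ρ + ‖(Submodule.orthogonalProjectionOnto M k : Ee N)‖ ^ 2) :=
        mul_le_mul_of_nonneg_right hψprod hsumnn
    _ = ρ + ‖(Submodule.orthogonalProjectionOnto M k : Ee N)‖ ^ 2 := one_mul _
    _ ≤ (2 / δ) * (1 + 2 / γ) * A + (1 / c) * A := add_le_add hρle hp
    _ = ((2/δ)*(1+2/γ) + 1/c) * A := by ring
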